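/- With the same hypotheses on ν, r, V as above: if β + (k+1)/r < β' ≤ 1 for k ∈ {0,…,⌊r⌋−1}, then α ↦ P_{k,α} is continuously differentiable from (−a₀,a₀) to L(B_β, B_{β'}) with derivative P_{k+1,α}; quantitatively, with σ = r(β'−β) − (k+1) ∈ (0,1], ‖P_{k,α}f − P_{k,α'}f − (α−α')P_{k+1,α'}f‖_{β'} ≤ 2AB |α−α'|^{1+σ} ‖f‖_β for all α,α' ∈ (−a₀,a₀) and f ∈ B_β. -/

import Mathlib

open MeasureTheory Set

/-- The formal derivative operators `P_{k,α} f(x) = (-1)^k x^k ∫ f(y) ν^{(k)}(y-αx) dy` of the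
AR(1) transition operator. -/
noncomputable def arOpD (ν : ℝ → ℝ) (k : ℕ) (α : ℝ) (f : ℝ → ℝ) (x : ℝ) : ℝ :=
  (-1 : ℝ) ^ k * x ^ k * ∫ y, f y * iteratedDeriv k ν (y - α * x)

/-!
Write `E` for the left-hand side, `δ = |α - α'|`, `V(x) = (1 + |x|)^r` and `K = F A B V(x)^β`.
Bounding the three operators separately gives `E ≤ (2|x|^k + δ|x|^{k+1}) K`. Taylor's formula
with integral remainder in `α`, applied to `ν^{(k)}(y - αx)` under the `y`-integral and followed
by Tonelli, gives `E ≤ δ² |x|^{k+2} K`: the weight bound `∫ V^β(y) ν(y - sx) dy ≤ B V(x)^β` holds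
for every `s` between `α'` and `α`. The second bound is the better one when `δ(1+|x|) ≤ 2`, the
first otherwise, and in both regimes the minimum is at most `2 δ^{1+σ} (1+|x|)^{k+1+σ}`; finally
`V(x)^β (1+|x|)^{k+1+σ} = V(x)^{β'}` by the definition of `σ`.
-/

open scoped Interval

theorem hasDerivAt_comp_sub_mul {φ : ℝ → ℝ} (hφ : Differentiable ℝ φ) (x y s : ℝ) :
    HasDerivAt (fun s => φ (y - s * x)) (-x * deriv φ (y - s * x)) s :=
  ((hφ _).hasDerivAt.comp s (((hasDerivAt_id' s).mul_const x).const_sub y)).congr_deriv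
    (by ring)

theorem sub_sub_mul_eq_integral_of_hasDerivAt {h h' h'' : ℝ → ℝ} {a b : ℝ}
    (hh : ∀ s, HasDerivAt h (h' s) s) (hh' : ∀ s, HasDerivAt h' (h'' s) s)
    (hh'' : IntervalIntegrable h'' volume a b) :
    h b - h a - (b - a) * h' a = ∫ s in a..b, (b - s) * h'' s := by
  have hderiv : ∀ s ∈ uIcc a b,
      HasDerivAt (fun s => h s + (b - s) * h' s) ((b - s) * h'' s) s := fun s _ =>
    ((hh s).add (((hasDerivAt_id' s).const_sub b).mul (hh' s))).congr_deriv (by ring)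
  rw [intervalIntegral.integral_eq_sub_of_hasDerivAt hderiv
    (hh''.continuousOn_mul (by fun_prop))]
  ring

theorem taylor_comp_sub_mul {g : ℝ → ℝ} (hg : ContDiff ℝ 2 g) (a b x y : ℝ) :
    g (y - b * x) - g (y - a * x) + (b - a) * x * deriv g (y - a * x) =
      ∫ s in a..b, (b - s) * (x ^ 2 * deriv (deriv g) (y - s * x)) := by
  have hg' : ContDiff ℝ 1 (deriv g) := hg.iterate_deriv' 1 1
  have hh' : ∀ s, HasDerivAt (fun s => -x * deriv g (y - s * x))
      (x ^ 2 * deriv (deriv g) (y - s * x)) s := fun s =>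
    ((hasDerivAt_comp_sub_mul (hg'.differentiable (by norm_num)) x y s).const_mul (-x)).congr_deriv
      (by ring)
  have hcont : Continuous fun s => x ^ 2 * deriv (deriv g) (y - s * x) := by
    have := hg'.continuous_deriv le_rfl
    fun_prop
  rw [← sub_sub_mul_eq_integral_of_hasDerivAt
    (hasDerivAt_comp_sub_mul (hg.differentiable (by norm_num)) x y) hh'
    (hcont.intervalIntegrable a b)]
  ring

theorem abs_taylor_comp_sub_mul_le {g ν : ℝ → ℝ} {A : ℝ} (hg : ContDiff ℝ 2 g)
    (hν : Continuous ν) (hg'' : ∀ t, |deriv (deriv g) t| ≤ A * ν t) (a b x y : ℝ) :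
    |g (y - b * x) - g (y - a * x) + (b - a) * x * deriv g (y - a * x)| ≤
      |b - a| * x ^ 2 * A * ∫ s in Ι a b, ν (y - s * x) := by
  have hg''c : Continuous (deriv (deriv g)) :=
    (hg.iterate_deriv' 1 1).continuous_deriv le_rfl
  rw [taylor_comp_sub_mul hg, ← integral_const_mul (μ := volume.restrict (Ι a b))]
  refine (intervalIntegral.norm_integral_le_integral_norm_uIoc (μ := volume)
    (f := fun s => (b - s) * (x ^ 2 * deriv (deriv g) (y - s * x)))).trans
    (setIntegral_mono_on ?_ ?_ measurableSet_uIoc fun s hs => ?_)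
  · exact Continuous.integrableOn_uIoc (by fun_prop)
  · exact Continuous.integrableOn_uIoc (by fun_prop)
  · rw [norm_mul, norm_mul, Real.norm_eq_abs, Real.norm_eq_abs, Real.norm_eq_abs, abs_pow,
      sq_abs, mul_assoc _ A, mul_assoc |b - a|]
    have hbs : |b - s| ≤ |b - a| := abs_sub_right_of_mem_uIcc (uIoc_subset_uIcc hs)
    gcongr
    exact hg'' _

theorem abs_integral_le_of_abs_le_integral {X Y : Type*} [MeasurableSpace X]
    [MeasurableSpace Y] {μ : Measure X} {ρ : Measure Y} [SFinite μ] [IsFiniteMeasure ρ]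
    {φ : X → ℝ} {G : X → Y → ℝ} {C : ℝ} (hφ : AEStronglyMeasurable φ μ)
    (hG : Measurable (Function.uncurry G)) (hG0 : ∀ y s, 0 ≤ G y s)
    (hGs : ∀ y, Integrable (G y) ρ) (hφG : ∀ y, |φ y| ≤ ∫ s, G y s ∂ρ)
    (hGy : ∀ᵐ s ∂ρ, Integrable (fun y => G y s) μ) (hC : ∀ᵐ s ∂ρ, ∫ y, G y s ∂μ ≤ C)
    (hC0 : 0 ≤ C) :
    |∫ y, φ y ∂μ| ≤ C * ρ.real univ := by
  refine abs_integral_le_integral_abs.trans ?_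
  rw [integral_eq_lintegral_of_nonneg_ae (ae_of_all _ fun _ => abs_nonneg _) hφ.norm]
  refine ENNReal.toReal_le_of_le_ofReal (by positivity) ?_
  calc ∫⁻ y, ENNReal.ofReal |φ y| ∂μ ≤ ∫⁻ y, ∫⁻ s, ENNReal.ofReal (G y s) ∂ρ ∂μ :=
        lintegral_mono fun y => (ENNReal.ofReal_le_ofReal (hφG y)).trans_eq
          (ofReal_integral_eq_lintegral_ofReal (hGs y) (ae_of_all _ (hG0 y)))
    _ = ∫⁻ s, ∫⁻ y, ENNReal.ofReal (G y s) ∂μ ∂ρ :=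
        lintegral_lintegral_swap (ENNReal.measurable_ofReal.comp hG).aemeasurable
    _ ≤ ∫⁻ _, ENNReal.ofReal C ∂ρ := by
        refine lintegral_mono_ae ?_
        filter_upwards [hGy, hC] with s hs hsC
        rw [← ofReal_integral_eq_lintegral_ofReal hs (ae_of_all _ fun y => hG0 y s)]
        exact ENNReal.ofReal_le_ofReal hsC
    _ = ENNReal.ofReal (C * ρ.real univ) := by
        rw [lintegral_const, ENNReal.ofReal_mul hC0, ofReal_measureReal]

theorem abs_mul_le_of_abs_le {f g W ν : ℝ → ℝ} {A F : ℝ} (hf : ∀ y, |f y| ≤ F * W y)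
    (hg : ∀ t, |g t| ≤ A * ν t) (y t : ℝ) : |f y * g t| ≤ F * A * (W y * ν t) := by
  rw [abs_mul]
  exact (mul_le_mul (hf y) (hg t) (abs_nonneg _) ((abs_nonneg _).trans (hf y))).trans_eq
    (by ring)

theorem integrable_mul_comp_sub {f g W ν : ℝ → ℝ} {A F c : ℝ} (hfm : Measurable f)
    (hf : ∀ y, |f y| ≤ F * W y) (hgm : Measurable g) (hg : ∀ t, |g t| ≤ A * ν t)
    (hWν : Integrable fun y => W y * ν (y - c)) :
    Integrable fun y => f y * g (y - c) :=
  (hWν.const_mul (F * A)).mono'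
    (hfm.mul (hgm.comp (measurable_id.sub_const c))).aestronglyMeasurable
    (ae_of_all _ fun y => abs_mul_le_of_abs_le hf hg y (y - c))

theorem abs_integral_mul_comp_sub_le {f g W ν : ℝ → ℝ} {A F c : ℝ} (hfm : Measurable f)
    (hf : ∀ y, |f y| ≤ F * W y) (hgm : Measurable g) (hg : ∀ t, |g t| ≤ A * ν t)
    (hWν : Integrable fun y => W y * ν (y - c)) :
    |∫ y, f y * g (y - c)| ≤ F * A * ∫ y, W y * ν (y - c) := by
  rw [← integral_const_mul]
  exact abs_integral_le_integral_abs.trans <| integral_mono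
    (integrable_mul_comp_sub hfm hf hgm hg hWν).abs (hWν.const_mul _)
    fun y => abs_mul_le_of_abs_le hf hg y (y - c)

theorem abs_integral_mul_taylor_comp_sub_mul_le {f g W ν : ℝ → ℝ} {A C F a b x : ℝ}
    (hfm : Measurable f) (hF : 0 ≤ F) (hf : ∀ y, |f y| ≤ F * W y) (hg : ContDiff ℝ 2 g)
    (hg'' : ∀ t, |deriv (deriv g) t| ≤ A * ν t) (hA : 0 ≤ A) (hν : Continuous ν)
    (hν0 : ∀ t, 0 ≤ ν t) (hW : Measurable W) (hW0 : ∀ y, 0 ≤ W y)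
    (hWν : ∀ s ∈ Ι a b, Integrable fun y => W y * ν (y - s * x))
    (hC : ∀ s ∈ Ι a b, ∫ y, W y * ν (y - s * x) ≤ C) (hC0 : 0 ≤ C) :
    |∫ y, f y * (g (y - b * x) - g (y - a * x) + (b - a) * x * deriv g (y - a * x))| ≤
      (b - a) ^ 2 * x ^ 2 * (F * A * C) := by
  set K := F * (|b - a| * x ^ 2 * A)
  have hK : 0 ≤ K := by positivity
  have hg' : ContDiff ℝ 1 (deriv g) := hg.iterate_deriv' 1 1
  have hgc := hg.continuous
  have hg'c := hg'.continuous
  have hS : volume (Ι a b) = ENNReal.ofReal |b - a| := Real.volume_uIoc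
  have : IsFiniteMeasure (volume.restrict (Ι a b)) :=
    isFiniteMeasure_restrict.2 (hS ▸ ENNReal.ofReal_ne_top)
  have key := abs_integral_le_of_abs_le_integral (μ := volume)
    (ρ := volume.restrict (Ι a b)) (G := fun y s => K * (W y * ν (y - s * x))) (C := K * C)
    (φ := fun y => f y * (g (y - b * x) - g (y - a * x) + (b - a) * x * deriv g (y - a * x)))
    (by fun_prop) (by fun_prop)
    (fun y s => mul_nonneg hK (mul_nonneg (hW0 y) (hν0 _)))
    (fun y => Continuous.integrableOn_uIoc (by fun_prop))
    (fun y => by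
      simp only [integral_const_mul]
      rw [abs_mul]
      refine (mul_le_mul (hf y) (abs_taylor_comp_sub_mul_le hg hν hg'' a b x y) (abs_nonneg _)
        ((abs_nonneg _).trans (hf y))).trans_eq (by ring))
    ((ae_restrict_iff' measurableSet_uIoc).2 (ae_of_all _ fun s hs => (hWν s hs).const_mul K))
    ((ae_restrict_iff' measurableSet_uIoc).2 (ae_of_all _ fun s hs => by
      rw [integral_const_mul]; exact mul_le_mul_of_nonneg_left (hC s hs) hK))
    (mul_nonneg hK hC0)
  rw [measureReal_restrict_apply_univ, Measure.real, hS, ENNReal.toReal_ofReal (abs_nonneg _)]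
    at key
  refine key.trans_eq ?_
  rw [← sq_abs (b - a)]
  ring

theorem abs_arOpD_le {ν W f : ℝ → ℝ} {A C F s x : ℝ} {j : ℕ} (hfm : Measurable f)
    (hf : ∀ y, |f y| ≤ F * W y) (hm : Measurable (iteratedDeriv j ν))
    (hA : ∀ t, |iteratedDeriv j ν t| ≤ A * ν t) (hFA : 0 ≤ F * A)
    (hWν : Integrable fun y => W y * ν (y - s * x)) (hC : ∫ y, W y * ν (y - s * x) ≤ C) :
    |arOpD ν j s f x| ≤ |x| ^ j * (F * A * C) := by
  rw [arOpD, abs_mul, abs_mul, abs_pow, abs_pow, abs_neg, abs_one, one_pow, one_mul]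
  exact mul_le_mul_of_nonneg_left ((abs_integral_mul_comp_sub_le hfm hf hm hA hWν).trans
    (mul_le_mul_of_nonneg_left hC hFA)) (by positivity)

theorem abs_arOpD_sub_sub_mul_le {ν W f : ℝ → ℝ} {A C F x α α' : ℝ} {k : ℕ}
    (hfm : Measurable f) (hf : ∀ y, |f y| ≤ F * W y) (hν : ContDiff ℝ (k + 1 : ℕ) ν)
    (hA : ∀ j ≤ k + 1, ∀ t, |iteratedDeriv j ν t| ≤ A * ν t) (hFA : 0 ≤ F * A)
    (hWν : ∀ s ∈ uIcc α' α, Integrable fun y => W y * ν (y - s * x))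
    (hC : ∀ s ∈ uIcc α' α, ∫ y, W y * ν (y - s * x) ≤ C) :
    |arOpD ν k α f x - arOpD ν k α' f x - (α - α') * arOpD ν (k + 1) α' f x| ≤
      (2 * |x| ^ k + |α - α'| * |x| ^ (k + 1)) * (F * A * C) := by
  have hP : ∀ j ≤ k + 1, ∀ s ∈ uIcc α' α, |arOpD ν j s f x| ≤ |x| ^ j * (F * A * C) :=
    fun j hj s hs => abs_arOpD_le hfm hf
      (hν.continuous_iteratedDeriv j (by exact_mod_cast hj)).measurable (hA j hj) hFA
      (hWν s hs) (hC s hs)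
  have hα := hP k k.le_succ α right_mem_uIcc
  have hα' := hP k k.le_succ α' left_mem_uIcc
  have hα'₁ := hP (k + 1) le_rfl α' left_mem_uIcc
  calc _ ≤ |arOpD ν k α f x| + |arOpD ν k α' f x| + |α - α'| * |arOpD ν (k + 1) α' f x| := by
        rw [← abs_mul]
        exact (abs_sub _ _).trans (add_le_add_left (abs_sub _ _) _)
    _ ≤ |x| ^ k * (F * A * C) + |x| ^ k * (F * A * C) +
          |α - α'| * (|x| ^ (k + 1) * (F * A * C)) := by
        gcongr
    _ = _ := by ring

theorem arOpD_sub_sub_mul_eq {ν f : ℝ → ℝ} {x α α' : ℝ} {k : ℕ}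
    (hα : Integrable fun y => f y * iteratedDeriv k ν (y - α * x))
    (hα' : Integrable fun y => f y * iteratedDeriv k ν (y - α' * x))
    (hα'₁ : Integrable fun y => f y * iteratedDeriv (k + 1) ν (y - α' * x)) :
    arOpD ν k α f x - arOpD ν k α' f x - (α - α') * arOpD ν (k + 1) α' f x =
      (-1) ^ k * x ^ k * ∫ y, f y * (iteratedDeriv k ν (y - α * x) -
        iteratedDeriv k ν (y - α' * x) + (α - α') * x * iteratedDeriv (k + 1) ν (y - α' * x)) := by
  have hsplit : (fun y => f y * (iteratedDeriv k ν (y - α * x) -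
      iteratedDeriv k ν (y - α' * x) + (α - α') * x * iteratedDeriv (k + 1) ν (y - α' * x))) =
      fun y => (f y * iteratedDeriv k ν (y - α * x) - f y * iteratedDeriv k ν (y - α' * x)) +
        (α - α') * x * (f y * iteratedDeriv (k + 1) ν (y - α' * x)) := by
    funext y; ring
  have hdiff : Integrable fun y =>
      f y * iteratedDeriv k ν (y - α * x) - f y * iteratedDeriv k ν (y - α' * x) := hα.sub hα'
  rw [hsplit, integral_add hdiff (hα'₁.const_mul _), integral_sub hα hα',
    integral_const_mul]
  simp only [arOpD]
  ring

theorem abs_arOpD_sub_sub_mul_le_sq {ν W f : ℝ → ℝ} {A C F x α α' : ℝ} {k : ℕ}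
    (hfm : Measurable f) (hF : 0 ≤ F) (hf : ∀ y, |f y| ≤ F * W y)
    (hν : ContDiff ℝ (k + 2 : ℕ) ν) (hν0 : ∀ t, 0 ≤ ν t)
    (hA : ∀ j ≤ k + 2, ∀ t, |iteratedDeriv j ν t| ≤ A * ν t) (hA0 : 0 ≤ A)
    (hW : Measurable W) (hW0 : ∀ y, 0 ≤ W y)
    (hWν : ∀ s ∈ uIcc α' α, Integrable fun y => W y * ν (y - s * x))
    (hC : ∀ s ∈ uIcc α' α, ∫ y, W y * ν (y - s * x) ≤ C) (hC0 : 0 ≤ C) :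
    |arOpD ν k α f x - arOpD ν k α' f x - (α - α') * arOpD ν (k + 1) α' f x| ≤
      |α - α'| ^ 2 * |x| ^ (k + 2) * (F * A * C) := by
  have hint : ∀ j ≤ k + 1, ∀ s ∈ uIcc α' α,
      Integrable fun y => f y * iteratedDeriv j ν (y - s * x) := fun j hj s hs =>
    integrable_mul_comp_sub hfm hf
      (hν.continuous_iteratedDeriv j (by exact_mod_cast hj.trans k.succ.le_succ)).measurable
      (hA j (hj.trans k.succ.le_succ)) (hWν s hs)
  have hg : ContDiff ℝ 2 (iteratedDeriv k ν) := by
    rw [iteratedDeriv_eq_iterate]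
    exact ContDiff.iterate_deriv' 2 k (by rwa [add_comm] at hν)
  have hg'' : ∀ t, |deriv (deriv (iteratedDeriv k ν)) t| ≤ A * ν t := by
    simpa only [iteratedDeriv_succ] using hA (k + 2) le_rfl
  rw [arOpD_sub_sub_mul_eq (hint k k.le_succ α right_mem_uIcc) (hint k k.le_succ α' left_mem_uIcc)
    (hint (k + 1) le_rfl α' left_mem_uIcc), iteratedDeriv_succ, abs_mul, abs_mul, abs_pow,
    abs_pow, abs_neg, abs_one, one_pow, one_mul]
  calc _ ≤ |x| ^ k * ((α - α') ^ 2 * x ^ 2 * (F * A * C)) := by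
        gcongr
        exact abs_integral_mul_taylor_comp_sub_mul_le hfm hF hf hg hg'' hA0 hν.continuous hν0 hW
          hW0 (fun s hs => hWν s (uIoc_subset_uIcc hs)) (fun s hs => hC s (uIoc_subset_uIcc hs))
          hC0
    _ = _ := by rw [← sq_abs x, ← sq_abs (α - α')]; ring

theorem min_le_two_mul_rpow {t u δ σ : ℝ} (k : ℕ) (ht : 0 ≤ t) (htu : t ≤ u) (hδ : 0 ≤ δ)
    (hσ : σ ∈ Ioc 0 1) :
    min (2 * t ^ k + δ * t ^ (k + 1)) (δ ^ 2 * t ^ (k + 2)) ≤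
      2 * δ ^ (1 + σ) * u ^ ((k : ℝ) + 1 + σ) := by
  have hu : 0 ≤ u := ht.trans htu
  have hδu : 0 ≤ δ * u := mul_nonneg hδ hu
  have hrhs : δ ^ (1 + σ) * u ^ ((k : ℝ) + 1 + σ) = δ * u ^ (k + 1) * (δ * u) ^ σ := by
    rw [Real.rpow_add' hδ (by linarith [hσ.1]), Real.rpow_add' hu (by positivity [hσ.1]),
      Real.mul_rpow hδ hu, Real.rpow_one, ← Nat.cast_add_one, Real.rpow_natCast]
    ring
  rw [mul_assoc, hrhs]
  have hmono : min (2 * t ^ k + δ * t ^ (k + 1)) (δ ^ 2 * t ^ (k + 2)) ≤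
      min (2 * u ^ k + δ * u ^ (k + 1)) (δ ^ 2 * u ^ (k + 2)) :=
    min_le_min (by gcongr) (by gcongr)
  refine hmono.trans ?_
  rcases le_or_gt (δ * u) 2 with hsmall | hlarge
  · have hpow : (δ * u) ^ (1 - σ) ≤ 2 :=
      calc (δ * u) ^ (1 - σ) ≤ 2 ^ (1 - σ) := by gcongr; linarith [hσ.2]
        _ ≤ 2 ^ (1 : ℝ) := Real.rpow_le_rpow_of_exponent_le one_le_two (by linarith [hσ.1])
        _ = 2 := Real.rpow_one 2
    have hsplit : δ * u = (δ * u) ^ σ * (δ * u) ^ (1 - σ) := by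
      rw [← Real.rpow_add' hδu (by norm_num), add_sub_cancel, Real.rpow_one]
    calc _ ≤ δ ^ 2 * u ^ (k + 2) := min_le_right _ _
      _ = δ * u ^ (k + 1) * (δ * u) ^ σ * (δ * u) ^ (1 - σ) := by
          rw [mul_assoc _ ((δ * u) ^ σ), ← hsplit]; ring
      _ ≤ δ * u ^ (k + 1) * (δ * u) ^ σ * 2 := by gcongr
      _ = _ := by ring
  · have hpow : 1 ≤ (δ * u) ^ σ := Real.one_le_rpow (by linarith) hσ.1.le
    calc _ ≤ 2 * u ^ k + δ * u ^ (k + 1) := min_le_left _ _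
      _ ≤ 2 * (δ * u ^ (k + 1)) := by
          have : 2 * u ^ k ≤ δ * u ^ (k + 1) := by
            rw [pow_succ, ← mul_assoc, mul_right_comm]; gcongr
          linarith
      _ ≤ 2 * (δ * u ^ (k + 1) * (δ * u) ^ σ) :=
          mul_le_mul_of_nonneg_left (le_mul_of_one_le_right (by positivity) hpow) zero_le_two

theorem stmt16_general (ν : ℝ → ℝ) (hpos : ∀ t, 0 < ν t)
    (r : ℝ)
    (hsmooth : ContDiff ℝ ((Nat.floor r + 1 : ℕ) : ℕ∞) ν)
    (A : ℝ) (hA : ∀ j ≤ Nat.floor r + 1, ∀ t, |iteratedDeriv j ν t| ≤ A * ν t)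
    (a₀ : ℝ)
    (β β' : ℝ) (k : ℕ) (hk : k + 1 ≤ Nat.floor r)
    (σ : ℝ) (hσdef : σ = r * (β' - β) - (k + 1)) (hσ : σ ∈ Set.Ioc (0 : ℝ) 1)
    (B : ℝ)
    (hBint : ∀ α ∈ Set.Icc (-a₀) a₀, ∀ x : ℝ,
      Integrable (fun y => ((1 + |y|) ^ r) ^ β * ν (y - α * x)))
    (hB : ∀ α ∈ Set.Icc (-a₀) a₀, ∀ x : ℝ,
      (∫ y, ((1 + |y|) ^ r) ^ β * ν (y - α * x)) ≤ B * ((1 + |x|) ^ r) ^ β)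
    (f : ℝ → ℝ) (hfm : Measurable f) (F : ℝ) (hF : 0 ≤ F)
    (hf : ∀ y, |f y| ≤ F * ((1 + |y|) ^ r) ^ β)
    (α α' : ℝ) (hα : α ∈ Set.Ioo (-a₀) a₀) (hα' : α' ∈ Set.Ioo (-a₀) a₀) (x : ℝ) :
    |arOpD ν k α f x - arOpD ν k α' f x - (α - α') * arOpD ν (k + 1) α' f x|
      ≤ 2 * A * B * |α - α'| ^ (1 + σ) * F * ((1 + |x|) ^ r) ^ β' := by
  have hweight : ((1 + |x|) ^ r) ^ β' = ((1 + |x|) ^ r) ^ β * (1 + |x|) ^ ((k : ℝ) + 1 + σ) := by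
    have hx : 0 < 1 + |x| := by positivity
    rw [← Real.rpow_mul hx.le, ← Real.rpow_mul hx.le, ← Real.rpow_add hx, hσdef]
    ring_nf
  set W : ℝ → ℝ := fun y => ((1 + |y|) ^ r) ^ β
  have hS : uIcc α' α ⊆ Icc (-a₀) a₀ :=
    uIcc_subset_Icc (Ioo_subset_Icc_self hα') (Ioo_subset_Icc_self hα)
  have hWν := fun s (hs : s ∈ uIcc α' α) => hBint s (hS hs) x
  have hC := fun s (hs : s ∈ uIcc α' α) => hB s (hS hs) x
  have hA' : ∀ j ≤ k + 2, ∀ t, |iteratedDeriv j ν t| ≤ A * ν t := fun j hj => hA j (by omega)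
  have hA0 : 0 ≤ A :=
    nonneg_of_mul_nonneg_left ((abs_nonneg _).trans (hA' 0 (by omega) 0)) (hpos 0)
  have hC0 : 0 ≤ B * W x :=
    (integral_nonneg fun y => mul_nonneg (by positivity) (hpos _).le).trans (hC α right_mem_uIcc)
  have hν : ContDiff ℝ (k + 2 : ℕ) ν :=
    hsmooth.of_le (WithTop.coe_le_coe.2 (Nat.cast_le.2 (by omega)))
  have h₁ := abs_arOpD_sub_sub_mul_le hfm hf (hν.of_le (by exact_mod_cast k.succ.le_succ))
    (fun j hj => hA' j (by omega)) (mul_nonneg hF hA0) hWν hC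
  have h₂ := abs_arOpD_sub_sub_mul_le_sq hfm hF hf hν (fun t => (hpos t).le) hA' hA0
    (by fun_prop) (fun y => by positivity) hWν hC hC0
  have hinterp := min_le_two_mul_rpow k (abs_nonneg x) (le_add_of_nonneg_left zero_le_one)
    (abs_nonneg (α - α')) hσ
  calc _ ≤ min (2 * |x| ^ k + |α - α'| * |x| ^ (k + 1)) (|α - α'| ^ 2 * |x| ^ (k + 2)) *
          (F * A * (B * W x)) := by
        rw [min_mul_of_nonneg _ _ (mul_nonneg (mul_nonneg hF hA0) hC0)]
        exact le_min h₁ h₂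
    _ ≤ 2 * |α - α'| ^ (1 + σ) * (1 + |x|) ^ ((k : ℝ) + 1 + σ) * (F * A * (B * W x)) := by
        gcongr
    _ = _ := by rw [hweight]; ring

/-- Lemma 2.2 (ii), quantitative form: differentiability of `α ↦ P_{k,α}`
from `B_β` to `B_{β'}` with derivative `P_{k+1,α}` when `β + (k+1)/r < β' ≤ 1`, with
`σ = r(β'-β) - (k+1) ∈ (0,1]`:
`‖P_{k,α}f - P_{k,α'}f - (α-α')P_{k+1,α'}f‖_{β'} ≤ 2AB|α-α'|^{1+σ}‖f‖_β`. -/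
theorem stmt16 (ν : ℝ → ℝ) (hpos : ∀ t, 0 < ν t)
    (hint : Integrable ν) (hmass : ∫ x, ν x = 1)
    (r : ℝ) (hr : 1 ≤ r) (hrnotint : ∀ n : ℕ, (n : ℝ) ≠ r)
    (hsmooth : ContDiff ℝ ((Nat.floor r + 1 : ℕ) : ℕ∞) ν)
    (A : ℝ) (hA : ∀ j ≤ Nat.floor r + 1, ∀ t, |iteratedDeriv j ν t| ≤ A * ν t)
    (a₀ : ℝ) (ha₀ : a₀ ∈ Set.Ioo (0 : ℝ) 1)
    (β β' : ℝ) (hβ : 0 ≤ β) (k : ℕ) (hk : k + 1 ≤ Nat.floor r)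
    (hββ' : β + ((k : ℝ) + 1) / r < β') (hβ'1 : β' ≤ 1)
    (σ : ℝ) (hσdef : σ = r * (β' - β) - (k + 1)) (hσ : σ ∈ Set.Ioc (0 : ℝ) 1)
    (B : ℝ)
    (hBint : ∀ α ∈ Set.Icc (-a₀) a₀, ∀ x : ℝ,
      Integrable (fun y => ((1 + |y|) ^ r) ^ β * ν (y - α * x)))
    (hB : ∀ α ∈ Set.Icc (-a₀) a₀, ∀ x : ℝ,
      (∫ y, ((1 + |y|) ^ r) ^ β * ν (y - α * x)) ≤ B * ((1 + |x|) ^ r) ^ β)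
    (f : ℝ → ℝ) (hfm : Measurable f) (F : ℝ) (hF : 0 ≤ F)
    (hf : ∀ y, |f y| ≤ F * ((1 + |y|) ^ r) ^ β)
    (α α' : ℝ) (hα : α ∈ Set.Ioo (-a₀) a₀) (hα' : α' ∈ Set.Ioo (-a₀) a₀) (x : ℝ) :
    |arOpD ν k α f x - arOpD ν k α' f x - (α - α') * arOpD ν (k + 1) α' f x|
      ≤ 2 * A * B * |α - α'| ^ (1 + σ) * F * ((1 + |x|) ^ r) ^ β' :=
  stmt16_general ν hpos r hsmooth A hA a₀ β β' k hk σ hσdef hσ B hBint hB f hfm F hF hf α α' hα hα'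
    x
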